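/- For a scalable classifier predictor f with unique root ρ̄(x), and score function s(x,ŷ) = -ŷ·ρ̄(x), the ρ_ε-safe set S_ε = {x : f(x,|s_ε|) < 0} equals Σ_ε^a = {x : s(x,+1) < s_ε and s(x,-1) > s_ε}, where s_ε ∈ ℝ is any fixed threshold. (Proposition 1) -/
import Mathlib

/-- Proposition 1: S_ε = {x : f(x,|s_ε|) < 0} equals
Σ_ε^a = {x : s(x,+1) < s_ε ∧ s(x,-1) > s_ε}, where s(x,ŷ) = -ŷ·ρ̄(x). -/
theorem safe_set_eq_sigma_a {X : Type*} (f : X → ℝ → ℝ) (ρbar : X → ℝ)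
    (hmono : ∀ x, StrictMono (f x))
    (hroot : ∀ x, f x (ρbar x) = 0)
    (s : X → ℝ → ℝ)
    (hs : ∀ x, s x 1 = -ρbar x ∧ s x (-1) = ρbar x)
    (sε : ℝ) :
    {x : X | f x |sε| < 0} = {x : X | s x 1 < sε ∧ s x (-1) > sε} := by
  ext x
  simp only [Set.mem_setOf_eq, (hs x).1, (hs x).2, gt_iff_lt]
  have h1 : f x |sε| < 0 ↔ |sε| < ρbar x := by
    rw [← hroot x]
    exact (hmono x).lt_iff_lt
  rw [h1, abs_lt]
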